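/- arXiv:2105.03506 — 3 statements merged into one kernel-verified Lean document; each statement's English description precedes it below -/
import Mathlib

section
/- Define φ_sph(t)=q̄·(c+t)/(c+ξ'(q̄)) for t∈[0,ξ'(q̄)] and ψ_sph=ξ'∘φ_sph. Then ψ_sph maps [0,ξ'(q̄)] into itself, is strictly increasing and convex on [0,ξ'(q̄)], and satisfies ψ_sph(ξ'(q̄))=ξ'(q̄), ψ_sph'(ξ'(q̄))=1, and ψ_sph(t)>t for every t∈[0,ξ'(q̄)). -/
open Set Filter MeasureTheory

/-- A mean-field spin glass mixture function `ξ(z) = ∑_{p≥2} c_p² z^p`: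
nonnegative, exponentially decaying coefficients (indexed so that `coeff p = c_p²`),
vanishing in degrees 0 and 1, and not identically zero. -/
structure MixtureFunction where
  coeff : ℕ → ℝ
  coeff_nonneg : ∀ p, 0 ≤ coeff p
  coeff_zero : coeff 0 = 0
  coeff_one : coeff 1 = 0
  coeff_decay : ∃ C r : ℝ, 0 < C ∧ 0 < r ∧ r < 1 ∧ ∀ p, coeff p ≤ C * r ^ p
  nontrivial : ∃ p, coeff p ≠ 0

/-- The mixture function `ξ(z) = ∑_p c_p² z^p`. -/
noncomputable def MixtureFunction.xi (ξ : MixtureFunction) (z : ℝ) : ℝ :=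
  ∑' p : ℕ, ξ.coeff p * z ^ p

/-- The first derivative `ξ'(z) = ∑_p p c_p² z^(p-1)`. -/
noncomputable def MixtureFunction.xi1 (ξ : MixtureFunction) (z : ℝ) : ℝ :=
  ∑' p : ℕ, (p : ℝ) * ξ.coeff p * z ^ (p - 1)

/-- The second derivative `ξ''(z) = ∑_p p(p-1) c_p² z^(p-2)`. -/
noncomputable def MixtureFunction.xi2 (ξ : MixtureFunction) (z : ℝ) : ℝ :=
  ∑' p : ℕ, (p : ℝ) * ((p : ℝ) - 1) * ξ.coeff p * z ^ (p - 2)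

/-- The third derivative `ξ'''(z) = ∑_p p(p-1)(p-2) c_p² z^(p-3)`. -/
noncomputable def MixtureFunction.xi3 (ξ : MixtureFunction) (z : ℝ) : ℝ :=
  ∑' p : ℕ, (p : ℝ) * ((p : ℝ) - 1) * ((p : ℝ) - 2) * ξ.coeff p * z ^ (p - 3)

/-!
`φ_sph` is an increasing affine map sending `ξ'(q̄)` to `q̄`, so `ψ_sph` inherits monotonicity and
convexity from `ξ'` on `[0, 1]`, and the fixed-point equation `c + ξ'(q̄) = q̄ ξ''(q̄)` says exactly
that `ψ_sph'(ξ'(q̄)) = ξ''(q̄) q̄ / (c + ξ'(q̄)) = 1`. As `c > 0`, that equation is impossible for a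
purely quadratic `ξ`, so `ξ''` is strictly increasing; hence `ψ_sph' < 1` on `[0, ξ'(q̄))`, and the
mean value theorem puts `ψ_sph` above the diagonal there.
-/

theorem abs_mul_pow_le_abs {a z : ℝ} (hz : |z| ≤ 1) (n : ℕ) : |a * z ^ n| ≤ |a| := by
  rw [abs_mul, abs_pow]
  exact mul_le_of_le_one_right (abs_nonneg a) (pow_le_one₀ (abs_nonneg z) hz)

theorem Summable.mul_pow_of_abs_le_one {a : ℕ → ℝ} (ha : Summable a) {z : ℝ} (hz : |z| ≤ 1)
    (e : ℕ → ℕ) : Summable fun n => a n * z ^ e n :=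
  .of_norm_bounded ha.abs fun n => abs_mul_pow_le_abs hz (e n)

theorem ConvexOn.tsum {s : Set ℝ} {f : ℕ → ℝ → ℝ} (hs : Convex ℝ s)
    (hf : ∀ n, ConvexOn ℝ s (f n)) (hsum : ∀ x ∈ s, Summable fun n => f n x) :
    ConvexOn ℝ s fun x => ∑' n, f n x := by
  refine ⟨hs, fun x hx y hy a b ha hb hab => ?_⟩
  have hx' := (hsum x hx).mul_left a
  have hy' := (hsum y hy).mul_left b
  calc ∑' n, f n (a • x + b • y)
      ≤ ∑' n, (a * f n x + b * f n y) :=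
        (hsum _ (hs hx hy ha hb hab)).tsum_le_tsum (fun n => (hf n).2 hx hy ha hb hab)
          (hx'.add hy')
    _ = a • ∑' n, f n x + b • ∑' n, f n y := by
        rw [hx'.tsum_add hy', tsum_mul_left, tsum_mul_left, smul_eq_mul, smul_eq_mul]

theorem StrictMonoOn.tsum {s : Set ℝ} {f : ℕ → ℝ → ℝ} (hf : ∀ n, MonotoneOn (f n) s)
    (hstrict : ∃ n, StrictMonoOn (f n) s) (hsum : ∀ x ∈ s, Summable fun n => f n x) :
    StrictMonoOn (fun x => ∑' n, f n x) s := by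
  obtain ⟨m, hm⟩ := hstrict
  intro x hx y hy hxy
  exact (hsum x hx).tsum_lt_tsum (fun n => hf n hx hy hxy.le) (hm hx hy hxy) (hsum y hy)

theorem monotoneOn_const_mul_pow {a : ℝ} (ha : 0 ≤ a) (n : ℕ) :
    MonotoneOn (fun z : ℝ => a * z ^ n) (Ici 0) := fun _ hx _ _ hxy =>
  mul_le_mul_of_nonneg_left (pow_le_pow_left₀ hx hxy n) ha

theorem strictMonoOn_const_mul_pow {a : ℝ} (ha : 0 < a) {n : ℕ} (hn : n ≠ 0) :
    StrictMonoOn (fun z : ℝ => a * z ^ n) (Ici 0) := fun _ hx _ _ hxy =>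
  mul_lt_mul_of_pos_left (pow_lt_pow_left₀ hxy hx hn) ha

theorem convexOn_const_mul_pow {a : ℝ} (ha : 0 ≤ a) (n : ℕ) :
    ConvexOn ℝ (Ici 0) fun z : ℝ => a * z ^ n :=
  (convexOn_pow n).smul ha

theorem natCast_mul_natCast_sub_one_nonneg (p : ℕ) : 0 ≤ (p : ℝ) * ((p : ℝ) - 1) := by
  rcases p with _ | p
  · simp
  · push_cast
    nlinarith

theorem ConvexOn.comp_mul_add {f : ℝ → ℝ} {s : Set ℝ} (hf : ConvexOn ℝ s f) (a b : ℝ) :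
    ConvexOn ℝ ((fun t => a * t + b) ⁻¹' s) fun t => f (a * t + b) := by
  have hg : ⇑(AffineMap.lineMap b (a + b) : ℝ →ᵃ[ℝ] ℝ) = fun t => a * t + b := funext fun t => by
    simp [AffineMap.lineMap_apply_module]; ring
  simpa only [hg, Function.comp_def] using hf.comp_affineMap (AffineMap.lineMap b (a + b))

theorem lt_apply_of_deriv_lt_one_of_apply_eq {f f' : ℝ → ℝ} {t b : ℝ} (htb : t < b)
    (hf : ∀ s ∈ Icc t b, HasDerivAt f (f' s) s) (hf' : ∀ s ∈ Ioo t b, f' s < 1)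
    (hfb : f b = b) : t < f t := by
  obtain ⟨s, hs, hslope⟩ := exists_hasDerivAt_eq_slope f f' htb
    (fun x hx => (hf x hx).continuousAt.continuousWithinAt)
    (fun x hx => hf x (Ioo_subset_Icc_self hx))
  have := hf' s hs
  rw [hslope, hfb, div_lt_one (sub_pos.2 htb)] at this
  linarith

namespace MixtureFunction

variable (ξ : MixtureFunction)

theorem summable_natCast_pow_mul_coeff (k : ℕ) :
    Summable fun p : ℕ => (p : ℝ) ^ k * ξ.coeff p := by
  obtain ⟨C, r, hC, hr0, hr1, hdecay⟩ := ξ.coeff_decay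
  refine .of_nonneg_of_le (fun p => mul_nonneg (by positivity) (ξ.coeff_nonneg p))
    (fun p => ?_) ((summable_pow_mul_geometric_of_norm_lt_one k
      (by rwa [Real.norm_eq_abs, abs_of_pos hr0])).mul_left C)
  calc (p : ℝ) ^ k * ξ.coeff p ≤ (p : ℝ) ^ k * (C * r ^ p) :=
        mul_le_mul_of_nonneg_left (hdecay p) (by positivity)
    _ = C * ((p : ℝ) ^ k * r ^ p) := by ring

theorem summable_xi1_coeffs : Summable fun p : ℕ => (p : ℝ) * ξ.coeff p := by
  simpa using ξ.summable_natCast_pow_mul_coeff 1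

theorem summable_xi2_coeffs : Summable fun p : ℕ => (p : ℝ) * ((p : ℝ) - 1) * ξ.coeff p :=
  .of_nonneg_of_le
    (fun p => mul_nonneg (natCast_mul_natCast_sub_one_nonneg p) (ξ.coeff_nonneg p))
    (fun p => mul_le_mul_of_nonneg_right (by nlinarith) (ξ.coeff_nonneg p))
    (ξ.summable_natCast_pow_mul_coeff 2)

theorem summable_xi1_terms {z : ℝ} (hz : |z| ≤ 1) :
    Summable fun p : ℕ => (p : ℝ) * ξ.coeff p * z ^ (p - 1) :=
  ξ.summable_xi1_coeffs.mul_pow_of_abs_le_one hz _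

theorem summable_xi2_terms {z : ℝ} (hz : |z| ≤ 1) :
    Summable fun p : ℕ => (p : ℝ) * ((p : ℝ) - 1) * ξ.coeff p * z ^ (p - 2) :=
  ξ.summable_xi2_coeffs.mul_pow_of_abs_le_one hz _

theorem xi1_nonneg {z : ℝ} (hz : 0 ≤ z) : 0 ≤ ξ.xi1 z :=
  tsum_nonneg fun p => mul_nonneg (mul_nonneg p.cast_nonneg (ξ.coeff_nonneg p)) (pow_nonneg hz _)

theorem exists_two_le_coeff_ne_zero : ∃ p, 2 ≤ p ∧ ξ.coeff p ≠ 0 := by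
  obtain ⟨p, hp⟩ := ξ.nontrivial
  refine ⟨p, ?_, hp⟩
  by_contra! h
  interval_cases p
  exacts [hp ξ.coeff_zero, hp ξ.coeff_one]

theorem strictMonoOn_xi1 : StrictMonoOn ξ.xi1 (Icc 0 1) := by
  have hsub : Icc (0 : ℝ) 1 ⊆ Ici 0 := Icc_subset_Ici_self
  obtain ⟨p, hp, hcoeff⟩ := ξ.exists_two_le_coeff_ne_zero
  refine StrictMonoOn.tsum (fun p => ((monotoneOn_const_mul_pow
    (mul_nonneg p.cast_nonneg (ξ.coeff_nonneg p)) _).mono hsub)) ⟨p, ?_⟩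
    (fun z hz => ξ.summable_xi1_terms (abs_le.2 ⟨by linarith [hz.1], hz.2⟩))
  refine (strictMonoOn_const_mul_pow ?_ (by omega)).mono hsub
  exact mul_pos (by exact_mod_cast (by omega : 0 < p)) ((ξ.coeff_nonneg p).lt_of_ne' hcoeff)

theorem strictMonoOn_xi2 (h : ∃ p, 3 ≤ p ∧ ξ.coeff p ≠ 0) : StrictMonoOn ξ.xi2 (Icc 0 1) := by
  have hsub : Icc (0 : ℝ) 1 ⊆ Ici 0 := Icc_subset_Ici_self
  obtain ⟨p, hp, hcoeff⟩ := h
  refine StrictMonoOn.tsum (fun p => ((monotoneOn_const_mul_pow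
    (mul_nonneg (natCast_mul_natCast_sub_one_nonneg p) (ξ.coeff_nonneg p)) _).mono hsub)) ⟨p, ?_⟩
    (fun z hz => ξ.summable_xi2_terms (abs_le.2 ⟨by linarith [hz.1], hz.2⟩))
  have hp' : (3 : ℝ) ≤ p := by exact_mod_cast hp
  refine (strictMonoOn_const_mul_pow ?_ (by omega)).mono hsub
  exact mul_pos (by nlinarith) ((ξ.coeff_nonneg p).lt_of_ne' hcoeff)

theorem convexOn_xi1 : ConvexOn ℝ (Icc 0 1) ξ.xi1 :=
  ConvexOn.tsum (convex_Icc 0 1)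
    (fun p => (convexOn_const_mul_pow (mul_nonneg p.cast_nonneg (ξ.coeff_nonneg p)) _).subset
      Icc_subset_Ici_self (convex_Icc 0 1))
    (fun _ hz => ξ.summable_xi1_terms (abs_le.2 ⟨by linarith [hz.1], hz.2⟩))

theorem hasDerivAt_xi1 {z : ℝ} (hz : z ∈ Ioo (-1) 1) : HasDerivAt ξ.xi1 (ξ.xi2 z) z := by
  have hterm : ∀ (p : ℕ) (y : ℝ), HasDerivAt (fun z : ℝ => (p : ℝ) * ξ.coeff p * z ^ (p - 1))
      ((p : ℝ) * ((p : ℝ) - 1) * ξ.coeff p * y ^ (p - 2)) y := fun p y =>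
    ((hasDerivAt_pow (p - 1) y).const_mul _).congr_deriv (by
      rcases p with _ | p
      · simp
      · rw [show p + 1 - 2 = p - 1 by omega]
        push_cast
        ring)
  have hbound : ∀ (p : ℕ), ∀ y ∈ Ioo (-1 : ℝ) 1,
      ‖(p : ℝ) * ((p : ℝ) - 1) * ξ.coeff p * y ^ (p - 2)‖ ≤ (p : ℝ) * ((p : ℝ) - 1) * ξ.coeff p :=
    fun p y hy => (abs_mul_pow_le_abs (abs_le.2 ⟨hy.1.le, hy.2.le⟩) _).trans_eq
      (abs_of_nonneg (mul_nonneg (natCast_mul_natCast_sub_one_nonneg p) (ξ.coeff_nonneg p)))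
  exact hasDerivAt_tsum_of_isPreconnected ξ.summable_xi2_coeffs isOpen_Ioo isPreconnected_Ioo
    (fun p y _ => hterm p y) hbound (y₀ := 0) (by norm_num) (ξ.summable_xi1_terms (by simp)) hz

theorem exists_three_le_coeff_ne_zero {z : ℝ} (hz : ξ.xi1 z ≠ z * ξ.xi2 z) :
    ∃ p, 3 ≤ p ∧ ξ.coeff p ≠ 0 := by
  contrapose! hz
  rw [xi1, xi2, ← tsum_mul_left]
  congr 1
  funext p
  match p with
  | 0 => simp
  | 1 => simp [ξ.coeff_one]
  | 2 => norm_num; ring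
  | p + 3 => simp [hz (p + 3) (by omega)]

end MixtureFunction

theorem psi_sph_properties_general (ξ : MixtureFunction) (c : ℝ) (hc : 0 < c)
    (qbar : ℝ) (hqbar : qbar ∈ Ioo (0 : ℝ) 1)
    (hfix : c + ξ.xi1 qbar = qbar * ξ.xi2 qbar) :
    let φ : ℝ → ℝ := fun t => qbar * (c + t) / (c + ξ.xi1 qbar)
    let ψ : ℝ → ℝ := fun t => ξ.xi1 (φ t)
    MapsTo ψ (Icc 0 (ξ.xi1 qbar)) (Icc 0 (ξ.xi1 qbar)) ∧
      StrictMonoOn ψ (Icc 0 (ξ.xi1 qbar)) ∧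
      ConvexOn ℝ (Icc 0 (ξ.xi1 qbar)) ψ ∧
      ψ (ξ.xi1 qbar) = ξ.xi1 qbar ∧
      HasDerivAt ψ 1 (ξ.xi1 qbar) ∧
      ∀ t ∈ Ico 0 (ξ.xi1 qbar), t < ψ t := by
  intro φ ψ
  set M := ξ.xi1 qbar
  have hq : qbar ∈ Icc (0 : ℝ) 1 := Ioo_subset_Icc_self hqbar
  have hD : 0 < c + M := by linarith [ξ.xi1_nonneg hq.1]
  set κ := qbar / (c + M)
  have hκ_pos : 0 < κ := div_pos hqbar.1 hD
  have hκ : ξ.xi2 qbar * κ = 1 := by simp only [κ]; field_simp; linarith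
  have hφ : φ = fun t => κ * t + κ * c := funext fun t => by simp only [φ, κ]; ring
  have hφ_mono : StrictMono φ := hφ ▸ (strictMono_mul_left_of_pos hκ_pos).add_const _
  have hφM : φ M = qbar := mul_div_cancel_right₀ _ hD.ne'
  have hφ_maps : MapsTo φ (Icc 0 M) (Icc 0 qbar) := by
    refine (hφ_mono.monotone.mapsTo_Icc).mono_right (Icc_subset_Icc ?_ hφM.le)
    rw [hφ]; positivity
  have hφ_maps' : MapsTo φ (Icc 0 M) (Icc 0 1) := hφ_maps.mono_right (Icc_subset_Icc_right hq.2)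
  have hψ' : ∀ t ∈ Icc 0 M, HasDerivAt ψ (ξ.xi2 (φ t) * κ) t := fun t ht =>
    (ξ.hasDerivAt_xi1 ⟨by linarith [(hφ_maps ht).1], by linarith [(hφ_maps ht).2, hqbar.2]⟩).comp t
      (hφ ▸ ((hasDerivAt_id t).const_mul κ).add_const _ |>.congr_deriv (mul_one κ))
  have hcubic := ξ.exists_three_le_coeff_ne_zero (by linarith : M < qbar * ξ.xi2 qbar).ne
  refine ⟨fun t ht => ⟨ξ.xi1_nonneg (hφ_maps ht).1, ?_⟩,
    ξ.strictMonoOn_xi1.comp (hφ_mono.strictMonoOn _) hφ_maps', ?_, congrArg ξ.xi1 hφM, ?_, ?_⟩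
  · exact ξ.strictMonoOn_xi1.monotoneOn (hφ_maps' ht) hq (hφ_maps ht).2
  · show ConvexOn ℝ _ fun t => ξ.xi1 (φ t)
    rw [hφ]
    exact (ξ.convexOn_xi1.comp_mul_add κ (κ * c)).subset (hφ ▸ hφ_maps') (convex_Icc _ _)
  · simpa only [hφM, hκ] using hψ' M ⟨ξ.xi1_nonneg hq.1, le_rfl⟩
  · intro t ht
    refine lt_apply_of_deriv_lt_one_of_apply_eq ht.2 (fun s hs => hψ' s ⟨ht.1.trans hs.1, hs.2⟩)
      (fun s hs => hκ ▸ mul_lt_mul_of_pos_right ?_ hκ_pos) (congrArg ξ.xi1 hφM)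
    have hs' : s ∈ Icc 0 M := ⟨ht.1.trans hs.1.le, hs.2.le⟩
    exact ξ.strictMonoOn_xi2 hcubic (hφ_maps' hs') hq (hφM ▸ hφ_mono hs.2)

/-- Properties of the state-evolution map `ψ_sph = ξ' ∘ φ_sph`,
where `φ_sph(t) = q̄ (c + t)/(c + ξ'(q̄))`: it maps `[0, ξ'(q̄)]` into itself, is strictly
increasing and convex there, fixes `ξ'(q̄)` with derivative `1` there, and lies strictly
above the diagonal below the fixed point. -/
theorem psi_sph_properties (ξ : MixtureFunction) (c : ℝ) (hc : 0 < c)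
    (hlt : c + ξ.xi1 1 < ξ.xi2 1)
    (qbar : ℝ) (hqbar : qbar ∈ Ioo (0 : ℝ) 1)
    (hfix : c + ξ.xi1 qbar = qbar * ξ.xi2 qbar) :
    let φ : ℝ → ℝ := fun t => qbar * (c + t) / (c + ξ.xi1 qbar)
    let ψ : ℝ → ℝ := fun t => ξ.xi1 (φ t)
    MapsTo ψ (Icc 0 (ξ.xi1 qbar)) (Icc 0 (ξ.xi1 qbar)) ∧
      StrictMonoOn ψ (Icc 0 (ξ.xi1 qbar)) ∧
      ConvexOn ℝ (Icc 0 (ξ.xi1 qbar)) ψ ∧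
      ψ (ξ.xi1 qbar) = ξ.xi1 qbar ∧
      HasDerivAt ψ 1 (ξ.xi1 qbar) ∧
      ∀ t ∈ Ico 0 (ξ.xi1 qbar), t < ψ t :=
  psi_sph_properties_general ξ c hc qbar hqbar hfix
end

section
/- Let ξ be a mixture function, let c>0 satisfy c+ξ'(1)<ξ''(1), and let q̄∈(0,1) be the unique solution of c+ξ'(q̄)=q̄·ξ''(q̄). Let α:[0,1]→[0,∞) be nondecreasing with ∫₀¹α(r)dr<∞, set a(q)=∫₀^q α(r)dr, and let L∈ℝ satisfy L>∫₀¹α(r)dr. Suppose equality holds: (c+ξ'(1))·L − ∫₀¹ ξ''(q)·a(q) dq + ∫₀¹ (L−a(q))^{-1} dq = 2q̄·√(ξ''(q̄)) + 2∫_{q̄}^1 √(ξ''(q)) dq. Then a(q)=0 for all q∈[0,q̄] (equivalently α vanishes almost everywhere on [0,q̄)), L=ξ''(q̄)^{-1/2}, L−a(q)=ξ''(q)^{-1/2} for all q∈[q̄,1], and consequently the map q↦ξ''(q)^{-1/2} is concave on [q̄,1]. -/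
open Set Filter MeasureTheory

/-!
For `s ≥ 0` and `x > 0`, `s x + x⁻¹ - 2 √s = (√s x - 1)² / x ≥ 0`, with equality exactly when
`x = s^{-1/2}`. Take `s = max (ξ''(q̄), ξ'')`, which dominates `ξ''` and, by the fixed-point
equation for `q̄`, integrates to `c + ξ'(1)`; take `x = L - a`. Then the left side of the assumed
equality is `∫ (s x + x⁻¹) + ∫ (s - ξ'') a ≥ 2 ∫ √s`, which is its right side. Equality forces the
continuous nonnegative integrand to vanish, so `L - a = s^{-1/2}`: this is constant on `[0, q̄]`,
where `a(0) = 0`, and equals `ξ''^{-1/2}` on `[q̄, 1]`, where `L - a` is concave because `a` is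
the primitive of a nondecreasing function.
-/

open scoped Interval

lemma eq_zero_on_Icc_of_integral_eq_zero {f : ℝ → ℝ} {a b : ℝ} (hab : a < b)
    (hf : ContinuousOn f (Icc a b)) (hf0 : ∀ x ∈ Icc a b, 0 ≤ f x)
    (hint : ∫ x in a..b, f x = 0) : ∀ x ∈ Icc a b, f x = 0 := by
  by_contra! ⟨x, hx, hfx⟩
  have hpos := intervalIntegral.integral_lt_integral_of_continuousOn_of_le_of_exists_lt hab
    continuousOn_const hf (fun y hy => hf0 y (Ioc_subset_Icc_self hy))
    ⟨x, hx, (hf0 x hx).lt_of_ne' hfx⟩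
  simp only [intervalIntegral.integral_zero] at hpos
  linarith

lemma MonotoneOn.continuousOn_primitive {f : ℝ → ℝ} {a b : ℝ} (hab : a ≤ b)
    (hf : MonotoneOn f (Icc a b)) : ContinuousOn (fun x => ∫ t in a..x, f t) (Icc a b) := by
  rw [← uIcc_of_le hab] at hf ⊢
  exact intervalIntegral.continuousOn_primitive_interval' hf.intervalIntegrable left_mem_uIcc

lemma MonotoneOn.convexOn_primitive {f : ℝ → ℝ} {a b : ℝ} (hf : MonotoneOn f (Icc a b)) :
    ConvexOn ℝ (Icc a b) fun x => ∫ t in a..x, f t := by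
  have hint : ∀ x ∈ Icc a b, ∀ y ∈ Icc a b, IntervalIntegrable f volume x y := fun x hx y hy =>
    (hf.mono (uIcc_subset_Icc hx hy)).intervalIntegrable
  refine convexOn_iff_slope_mono_adjacent.2 ⟨convex_Icc a b, fun x y z hx hz hxy hyz => ?_⟩
  have hy : y ∈ Icc a b := ⟨hx.1.trans hxy.le, hyz.le.trans hz.2⟩
  have ha : a ∈ Icc a b := ⟨le_rfl, hx.1.trans hx.2⟩
  rw [intervalIntegral.integral_interval_sub_left (hint a ha y hy) (hint a ha x hx),
    intervalIntegral.integral_interval_sub_left (hint a ha z hz) (hint a ha y hy)]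
  have hleft : ∫ t in x..y, f t ≤ (y - x) * f y := by
    simpa using intervalIntegral.integral_mono_on hxy.le (hint x hx y hy) intervalIntegrable_const
      fun t ht => hf ⟨hx.1.trans ht.1, ht.2.trans hy.2⟩ hy ht.2
  have hright : (z - y) * f y ≤ ∫ t in y..z, f t := by
    simpa using intervalIntegral.integral_mono_on hyz.le intervalIntegrable_const (hint y hy z hz)
      fun t ht => hf hy ⟨hy.1.trans ht.1, ht.2.trans hz.2⟩ ht.1
  calc (∫ t in x..y, f t) / (y - x) ≤ f y := by rw [div_le_iff₀ (sub_pos.2 hxy)]; linarith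
    _ ≤ (∫ t in y..z, f t) / (z - y) := by rw [le_div_iff₀ (sub_pos.2 hyz)]; linarith

lemma integral_mem_Icc_of_nonneg {f : ℝ → ℝ} {a b x : ℝ} (hf0 : ∀ r ∈ Icc a b, 0 ≤ f r)
    (hfi : IntervalIntegrable f volume a b) (hx : x ∈ Icc a b) :
    ∫ t in a..x, f t ∈ Icc 0 (∫ t in a..b, f t) :=
  ⟨intervalIntegral.integral_nonneg hx.1 fun r hr => hf0 r ⟨hr.1, hr.2.trans hx.2⟩,
    intervalIntegral.integral_mono_interval le_rfl hx.1 hx.2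
      ((ae_restrict_iff' measurableSet_Ioc).2 (ae_of_all _ fun r hr =>
        hf0 r (Ioc_subset_Icc_self hr))) hfi⟩

lemma integral_comp_max_of_monotoneOn {f g : ℝ → ℝ} {a b t : ℝ} (hf : MonotoneOn f (Icc a b))
    (hfc : ContinuousOn f (Icc a b)) (hg : Continuous g) (ht : t ∈ Icc a b) :
    ∫ q in a..b, g (max (f t) (f q)) = (t - a) * g (f t) + ∫ q in t..b, g (f q) := by
  have hcont : ContinuousOn (fun q => g (max (f t) (f q))) (Icc a b) :=
    hg.comp_continuousOn (continuousOn_const.sup hfc)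
  have hint : ∀ x ∈ Icc a b, ∀ y ∈ Icc a b,
      IntervalIntegrable (fun q => g (max (f t) (f q))) volume x y := fun x hx y hy =>
    (hcont.mono (uIcc_subset_Icc hx hy)).intervalIntegrable
  have ha : a ∈ Icc a b := ⟨le_rfl, ht.1.trans ht.2⟩
  have hb : b ∈ Icc a b := ⟨ht.1.trans ht.2, le_rfl⟩
  rw [← intervalIntegral.integral_add_adjacent_intervals (hint a ha t ht) (hint t ht b hb)]
  congr 1
  · rw [intervalIntegral.integral_congr (g := fun _ => g (f t)), intervalIntegral.integral_const,
      smul_eq_mul]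
    intro q hq
    rw [uIcc_of_le ht.1] at hq
    simp only [max_eq_left (hf ⟨hq.1, hq.2.trans ht.2⟩ ht hq.2)]
  · refine intervalIntegral.integral_congr fun q hq => ?_
    rw [uIcc_of_le ht.2] at hq
    simp only [max_eq_right (hf ht ⟨ht.1.trans hq.1, hq.2⟩ hq.1)]

lemma mul_add_inv_sub_two_sqrt {s x : ℝ} (hs : 0 ≤ s) (hx : x ≠ 0) :
    s * x + x⁻¹ - 2 * √s = (√s * x - 1) ^ 2 / x := by
  have hsq : √s ^ 2 = s := Real.sq_sqrt hs
  field_simp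
  linear_combination (-x ^ 2) * hsq

theorem sub_eq_inv_sqrt_of_integral_eq {s t f : ℝ → ℝ} {a b L : ℝ} (hab : a < b)
    (hs : ContinuousOn s (Icc a b)) (ht : ContinuousOn t (Icc a b))
    (hf : ContinuousOn f (Icc a b)) (hs0 : ∀ q ∈ Icc a b, 0 ≤ s q)
    (hts : ∀ q ∈ Icc a b, t q ≤ s q) (hf0 : ∀ q ∈ Icc a b, 0 ≤ f q)
    (hfL : ∀ q ∈ Icc a b, f q < L)
    (heq : L * (∫ q in a..b, s q) - (∫ q in a..b, t q * f q) + (∫ q in a..b, (L - f q)⁻¹)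
      = 2 * ∫ q in a..b, √(s q)) :
    ∀ q ∈ Icc a b, L - f q = (√(s q))⁻¹ := by
  have hpos : ∀ q ∈ Icc a b, 0 < L - f q := fun q hq => sub_pos.2 (hfL q hq)
  have hgap : ∀ q ∈ Icc a b, s q * (L - f q) + (L - f q)⁻¹ - 2 * √(s q) =
      (√(s q) * (L - f q) - 1) ^ 2 / (L - f q) := fun q hq =>
    mul_add_inv_sub_two_sqrt (hs0 q hq) (hpos q hq).ne'
  set F : ℝ → ℝ := fun q =>
    (s q * (L - f q) + (L - f q)⁻¹ - 2 * √(s q)) + (s q - t q) * f q with hF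
  have hF0 : ∀ q ∈ Icc a b, 0 ≤ F q := fun q hq => by
    have := hpos q hq
    have := sub_nonneg.2 (hts q hq)
    have := hf0 q hq
    simp only [hF, hgap q hq]
    positivity
  have hinv : ContinuousOn (fun q => (L - f q)⁻¹) (Icc a b) :=
    (continuousOn_const.sub hf).inv₀ fun q hq => (hpos q hq).ne'
  have hsqrt : ContinuousOn (fun q => √(s q)) (Icc a b) := hs.sqrt
  have hFc : ContinuousOn F (Icc a b) := by
    simp only [hF]; fun_prop
  have hFint : ∫ q in a..b, F q = 0 := by
    have hi {g : ℝ → ℝ} (hg : ContinuousOn g (Icc a b)) : IntervalIntegrable g volume a b :=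
      hg.intervalIntegrable_of_Icc hab.le
    have htf : IntervalIntegrable (fun q => t q * f q) volume a b := hi (ht.mul hf)
    rw [intervalIntegral.integral_congr (g := fun q => L * s q - t q * f q + (L - f q)⁻¹
      - 2 * √(s q)) fun q _ => by simp only [hF]; ring,
      intervalIntegral.integral_sub ((((hi hs).const_mul L).sub htf).add (hi hinv))
        ((hi hsqrt).const_mul 2),
      intervalIntegral.integral_add (((hi hs).const_mul L).sub htf) (hi hinv),
      intervalIntegral.integral_sub ((hi hs).const_mul L) htf,
      intervalIntegral.integral_const_mul, intervalIntegral.integral_const_mul, heq, sub_self]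
  intro q hq
  have hgap0 : (√(s q) * (L - f q) - 1) ^ 2 / (L - f q) = 0 := by
    have hFq := eq_zero_on_Icc_of_integral_eq_zero hab hFc hF0 hFint q hq
    simp only [hF, hgap q hq] at hFq
    have := hpos q hq
    have : 0 ≤ (√(s q) * (L - f q) - 1) ^ 2 / (L - f q) := by positivity
    linarith [mul_nonneg (sub_nonneg.2 (hts q hq)) (hf0 q hq)]
  rw [div_eq_zero_iff, pow_eq_zero_iff two_ne_zero, sub_eq_zero] at hgap0
  exact eq_inv_of_mul_eq_one_right (hgap0.resolve_right (hpos q hq).ne')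

lemma abs_le_one_of_mem_Icc {x : ℝ} (hx : x ∈ Icc (0 : ℝ) 1) : |x| ≤ 1 :=
  abs_le.2 ⟨by linarith [hx.1], hx.2⟩

namespace MixtureFunction

variable (ξ : MixtureFunction)

lemma summable_sq_mul_coeff : Summable fun p : ℕ => (p : ℝ) ^ 2 * ξ.coeff p := by
  obtain ⟨C, r, -, hr0, hr1, hle⟩ := ξ.coeff_decay
  have hgeom : Summable fun p : ℕ => C * ((p : ℝ) ^ 2 * r ^ p) :=
    (summable_pow_mul_geometric_of_norm_lt_one 2 (by rwa [Real.norm_of_nonneg hr0.le])).mul_left C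
  refine hgeom.of_nonneg_of_le (fun p => mul_nonneg (sq_nonneg _) (ξ.coeff_nonneg p)) fun p => ?_
  calc (p : ℝ) ^ 2 * ξ.coeff p ≤ (p : ℝ) ^ 2 * (C * r ^ p) := by gcongr; exact hle p
    _ = C * ((p : ℝ) ^ 2 * r ^ p) := by ring

lemma natCast_mul_sub_one_nonneg (p : ℕ) : 0 ≤ (p : ℝ) * ((p : ℝ) - 1) := by
  rcases p with _ | p
  · simp
  · push_cast; nlinarith

lemma natCast_mul_sub_one_le_sq (p : ℕ) : (p : ℝ) * ((p : ℝ) - 1) ≤ (p : ℝ) ^ 2 := by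
  nlinarith [(Nat.cast_nonneg p : (0 : ℝ) ≤ p)]

variable {ξ}

lemma norm_xi1_term_le (p : ℕ) {x : ℝ} (hx : |x| ≤ 1) :
    ‖(p : ℝ) * ξ.coeff p * x ^ (p - 1)‖ ≤ (p : ℝ) ^ 2 * ξ.coeff p := by
  have hp : (p : ℝ) ≤ (p : ℝ) ^ 2 := by
    rcases p with _ | p
    · simp
    · push_cast; nlinarith
  have hcoeff : 0 ≤ (p : ℝ) * ξ.coeff p := mul_nonneg p.cast_nonneg (ξ.coeff_nonneg p)
  rw [Real.norm_eq_abs, abs_mul, abs_pow, abs_of_nonneg hcoeff]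
  calc (p : ℝ) * ξ.coeff p * |x| ^ (p - 1) ≤ (p : ℝ) * ξ.coeff p * 1 := by
        gcongr; exact pow_le_one₀ (abs_nonneg x) hx
    _ ≤ (p : ℝ) ^ 2 * ξ.coeff p := by rw [mul_one]; exact mul_le_mul_of_nonneg_right hp (ξ.coeff_nonneg p)

lemma norm_xi2_term_le (p : ℕ) {x : ℝ} (hx : |x| ≤ 1) :
    ‖(p : ℝ) * ((p : ℝ) - 1) * ξ.coeff p * x ^ (p - 2)‖ ≤ (p : ℝ) ^ 2 * ξ.coeff p := by
  have hcoeff : 0 ≤ (p : ℝ) * ((p : ℝ) - 1) * ξ.coeff p :=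
    mul_nonneg (natCast_mul_sub_one_nonneg p) (ξ.coeff_nonneg p)
  rw [Real.norm_eq_abs, abs_mul, abs_pow, abs_of_nonneg hcoeff]
  calc (p : ℝ) * ((p : ℝ) - 1) * ξ.coeff p * |x| ^ (p - 2)
      ≤ (p : ℝ) * ((p : ℝ) - 1) * ξ.coeff p * 1 := by
        gcongr; exact pow_le_one₀ (abs_nonneg x) hx
    _ ≤ (p : ℝ) ^ 2 * ξ.coeff p := by
        rw [mul_one]; exact mul_le_mul_of_nonneg_right (natCast_mul_sub_one_le_sq p) (ξ.coeff_nonneg p)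

lemma summable_xi1_term {x : ℝ} (hx : |x| ≤ 1) :
    Summable fun p : ℕ => (p : ℝ) * ξ.coeff p * x ^ (p - 1) :=
  .of_norm_bounded ξ.summable_sq_mul_coeff fun p => norm_xi1_term_le p hx

lemma summable_xi2_term {x : ℝ} (hx : |x| ≤ 1) :
    Summable fun p : ℕ => (p : ℝ) * ((p : ℝ) - 1) * ξ.coeff p * x ^ (p - 2) :=
  .of_norm_bounded ξ.summable_sq_mul_coeff fun p => norm_xi2_term_le p hx

lemma xi1_nonneg_s7 {x : ℝ} (hx : 0 ≤ x) : 0 ≤ ξ.xi1 x :=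
  tsum_nonneg fun p => by have := ξ.coeff_nonneg p; positivity

lemma monotoneOn_xi2 : MonotoneOn ξ.xi2 (Icc 0 1) := fun x hx y hy hxy => by
  have hcoeff (p : ℕ) : 0 ≤ (p : ℝ) * ((p : ℝ) - 1) * ξ.coeff p :=
    mul_nonneg (natCast_mul_sub_one_nonneg p) (ξ.coeff_nonneg p)
  exact (summable_xi2_term (abs_le_one_of_mem_Icc hx)).tsum_le_tsum
    (fun p => mul_le_mul_of_nonneg_left (pow_le_pow_left₀ hx.1 hxy _) (hcoeff p))
    (summable_xi2_term (abs_le_one_of_mem_Icc hy))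

lemma continuousOn_xi2 : ContinuousOn ξ.xi2 (Icc 0 1) :=
  continuousOn_tsum (fun p => by fun_prop) ξ.summable_sq_mul_coeff fun p x hx =>
    norm_xi2_term_le p (abs_le_one_of_mem_Icc hx)

lemma integral_xi2_term (p : ℕ) (x y : ℝ) :
    ∫ q in x..y, (p : ℝ) * ((p : ℝ) - 1) * ξ.coeff p * q ^ (p - 2) =
      (p : ℝ) * ξ.coeff p * y ^ (p - 1) - (p : ℝ) * ξ.coeff p * x ^ (p - 1) := by
  rw [intervalIntegral.integral_const_mul, integral_pow]
  match p with
  | 0 => simp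
  | 1 => simp
  | n + 2 =>
    have hn : (n : ℝ) + 1 ≠ 0 := by positivity
    simp only [Nat.add_sub_cancel, Nat.add_succ_sub_one]
    push_cast
    field_simp
    ring

lemma integral_xi2 {x y : ℝ} (hx : x ∈ Icc (0 : ℝ) 1) (hy : y ∈ Icc (0 : ℝ) 1) :
    ∫ q in x..y, ξ.xi2 q = ξ.xi1 y - ξ.xi1 x := by
  have habs : ∀ q ∈ Ι x y, |q| ≤ 1 := fun q hq =>
    abs_le_one_of_mem_Icc (uIcc_subset_Icc hx hy (uIoc_subset_uIcc hq))
  have hsum := intervalIntegral.hasSum_integral_of_dominated_convergence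
    (F := fun (p : ℕ) (q : ℝ) => (p : ℝ) * ((p : ℝ) - 1) * ξ.coeff p * q ^ (p - 2))
    (f := ξ.xi2) (μ := volume) (a := x) (b := y) (fun p _ => (p : ℝ) ^ 2 * ξ.coeff p)
    (fun p => by fun_prop)
    (fun p => ae_of_all _ fun q hq => norm_xi2_term_le p (habs q hq))
    (ae_of_all _ fun _ _ => ξ.summable_sq_mul_coeff) intervalIntegrable_const
    (ae_of_all _ fun q hq => (summable_xi2_term (habs q hq)).hasSum)
  simp only [integral_xi2_term] at hsum
  exact hsum.unique ((summable_xi1_term (abs_le_one_of_mem_Icc hy)).hasSum.sub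
    (summable_xi1_term (abs_le_one_of_mem_Icc hx)).hasSum)

variable {t : ℝ}

lemma integral_max_xi2 (ht : t ∈ Icc (0 : ℝ) 1) :
    ∫ q in (0 : ℝ)..1, max (ξ.xi2 t) (ξ.xi2 q) = t * ξ.xi2 t + (ξ.xi1 1 - ξ.xi1 t) := by
  simpa [integral_xi2 ht (right_mem_Icc.2 zero_le_one)] using
    integral_comp_max_of_monotoneOn ξ.monotoneOn_xi2 ξ.continuousOn_xi2 continuous_id ht

lemma integral_sqrt_max_xi2 (ht : t ∈ Icc (0 : ℝ) 1) :
    ∫ q in (0 : ℝ)..1, √(max (ξ.xi2 t) (ξ.xi2 q)) = t * √(ξ.xi2 t) + ∫ q in t..1, √(ξ.xi2 q) := by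
  simpa using integral_comp_max_of_monotoneOn ξ.monotoneOn_xi2 ξ.continuousOn_xi2
    Real.continuous_sqrt ht

lemma max_xi2_of_le {q : ℝ} (ht : t ≤ 1) (hq : q ∈ Icc 0 t) :
    max (ξ.xi2 t) (ξ.xi2 q) = ξ.xi2 t :=
  max_eq_left (ξ.monotoneOn_xi2 ⟨hq.1, hq.2.trans ht⟩ ⟨hq.1.trans hq.2, ht⟩ hq.2)

lemma max_xi2_of_ge {q : ℝ} (ht : 0 ≤ t) (hq : q ∈ Icc t 1) :
    max (ξ.xi2 t) (ξ.xi2 q) = ξ.xi2 q :=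
  max_eq_right (ξ.monotoneOn_xi2 ⟨ht, hq.1.trans hq.2⟩ ⟨ht.trans hq.1, hq.2⟩ hq.1)

end MixtureFunction

theorem crisanti_sommers_equality_case_general (ξ : MixtureFunction) (c : ℝ) (hc : 0 < c)
    (qbar : ℝ) (hqbar : qbar ∈ Ioo (0 : ℝ) 1)
    (hfix : c + ξ.xi1 qbar = qbar * ξ.xi2 qbar)
    (α : ℝ → ℝ) (hα0 : ∀ r ∈ Icc (0 : ℝ) 1, 0 ≤ α r)
    (hαmono : MonotoneOn α (Icc 0 1))
    (L : ℝ) (hL : (∫ r in (0 : ℝ)..1, α r) < L)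
    (heq : (c + ξ.xi1 1) * L - (∫ q in (0 : ℝ)..1, ξ.xi2 q * (∫ r in (0 : ℝ)..q, α r))
        + (∫ q in (0 : ℝ)..1, (L - ∫ r in (0 : ℝ)..q, α r)⁻¹)
      = 2 * qbar * Real.sqrt (ξ.xi2 qbar) + 2 * (∫ q in qbar..1, Real.sqrt (ξ.xi2 q))) :
    (∀ q ∈ Icc (0 : ℝ) qbar, (∫ r in (0 : ℝ)..q, α r) = 0) ∧
      L = (Real.sqrt (ξ.xi2 qbar))⁻¹ ∧
      (∀ q ∈ Icc qbar 1, L - (∫ r in (0 : ℝ)..q, α r) = (Real.sqrt (ξ.xi2 q))⁻¹) ∧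
      ConcaveOn ℝ (Icc qbar 1) (fun q => (Real.sqrt (ξ.xi2 q))⁻¹) := by
  have hq : qbar ∈ Icc (0 : ℝ) 1 := Ioo_subset_Icc_self hqbar
  have hxi2 : 0 < ξ.xi2 qbar :=
    pos_of_mul_pos_right (hfix ▸ add_pos_of_pos_of_nonneg hc (ξ.xi1_nonneg_s7 hq.1)) hq.1
  have hαint : IntervalIntegrable α volume 0 1 :=
    (uIcc_of_le (zero_le_one' ℝ) ▸ hαmono).intervalIntegrable
  have hb := sub_eq_inv_sqrt_of_integral_eq zero_lt_one
    (continuousOn_const.sup ξ.continuousOn_xi2) ξ.continuousOn_xi2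
    (hαmono.continuousOn_primitive zero_le_one)
    (fun q _ => hxi2.le.trans (le_max_left _ _)) (fun q _ => le_max_right _ _)
    (fun q hq' => (integral_mem_Icc_of_nonneg hα0 hαint hq').1)
    (fun q hq' => (integral_mem_Icc_of_nonneg hα0 hαint hq').2.trans_lt hL)
    (by rw [ξ.integral_max_xi2 hq, ξ.integral_sqrt_max_xi2 hq, ← hfix]; linear_combination heq)
  have hL' : L = (√(ξ.xi2 qbar))⁻¹ := by
    simpa [ξ.max_xi2_of_le hq.2 ⟨le_rfl, hq.1⟩] using hb 0 (left_mem_Icc.2 zero_le_one)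
  have hright : ∀ q ∈ Icc qbar 1, L - (∫ r in (0 : ℝ)..q, α r) = (√(ξ.xi2 q))⁻¹ := fun q hq' =>
    ξ.max_xi2_of_ge hq.1 hq' ▸ hb q ⟨hq.1.trans hq'.1, hq'.2⟩
  refine ⟨fun q hq' => ?_, hL', hright, ?_⟩
  · have := ξ.max_xi2_of_le hq.2 hq' ▸ hb q ⟨hq'.1, hq'.2.trans hq.2⟩
    linarith
  · exact ((concaveOn_const L (convex_Icc qbar 1)).sub
      (hαmono.convexOn_primitive.subset (Icc_subset_Icc_left hq.1) (convex_Icc qbar 1))).congr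
      hright

/-- Equality case in the spherical ground-state lower bound: if equality holds in the
Crisanti–Sommers lower bound, then `a ≡ 0` on `[0,q̄]`, `L = ξ''(q̄)^{-1/2}`,
`L - a(q) = ξ''(q)^{-1/2}` on `[q̄,1]`, and `q ↦ ξ''(q)^{-1/2}` is concave on `[q̄,1]`. -/
theorem crisanti_sommers_equality_case (ξ : MixtureFunction) (c : ℝ) (hc : 0 < c)
    (hlt : c + ξ.xi1 1 < ξ.xi2 1)
    (qbar : ℝ) (hqbar : qbar ∈ Ioo (0 : ℝ) 1)
    (hfix : c + ξ.xi1 qbar = qbar * ξ.xi2 qbar)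
    (α : ℝ → ℝ) (hα0 : ∀ r ∈ Icc (0 : ℝ) 1, 0 ≤ α r)
    (hαmono : MonotoneOn α (Icc 0 1))
    (hαint : IntervalIntegrable α volume 0 1)
    (L : ℝ) (hL : (∫ r in (0 : ℝ)..1, α r) < L)
    (heq : (c + ξ.xi1 1) * L - (∫ q in (0 : ℝ)..1, ξ.xi2 q * (∫ r in (0 : ℝ)..q, α r))
        + (∫ q in (0 : ℝ)..1, (L - ∫ r in (0 : ℝ)..q, α r)⁻¹)
      = 2 * qbar * Real.sqrt (ξ.xi2 qbar) + 2 * (∫ q in qbar..1, Real.sqrt (ξ.xi2 q))) :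
    (∀ q ∈ Icc (0 : ℝ) qbar, (∫ r in (0 : ℝ)..q, α r) = 0) ∧
      L = (Real.sqrt (ξ.xi2 qbar))⁻¹ ∧
      (∀ q ∈ Icc qbar 1, L - (∫ r in (0 : ℝ)..q, α r) = (Real.sqrt (ξ.xi2 q))⁻¹) ∧
      ConcaveOn ℝ (Icc qbar 1) (fun q => (Real.sqrt (ξ.xi2 q))⁻¹) :=
  crisanti_sommers_equality_case_general ξ c hc qbar hqbar hfix α hα0 hαmono L hL heq
end

section
/- Let ξ be a mixture function, let q₀∈(0,1), and let c≥0 satisfy c+ξ'(q₀)=q₀·ξ''(q₀). Assume the map s↦ξ''(s)^{-1/2} is concave on [q₀,1]. Define L=ξ''(q₀)^{-1/2} and α(s)=0 for s∈[0,q₀), α(s)=ξ'''(s)/(2·ξ''(s)^{3/2}) for s∈[q₀,1], and set a(q)=∫₀^q α(r)dr. Then α is nonnegative and nondecreasing on [0,1], L−∫_{q₀}^s α(r)dr = ξ''(s)^{-1/2} for every s∈[q₀,1], L>∫₀¹α(r)dr, and ξ'(s)+c = ∫₀^s (L−a(q))^{-2} dq for every s∈[q₀,1]. -/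
/-!
Write `f = ξ''^{-1/2}`. Then `f' = -ξ'''/(2 ξ''^{3/2})`, so on `[q₀,1]` the order parameter `α` is
`-f'`: it is nonnegative because `ξ''' ≥ 0`, and nondecreasing because `f` is concave. By the
fundamental theorem of calculus `L - a(q) = f(max q q₀)`, hence `(L - a(q))⁻² = ξ''(max q q₀)`,
whose integral over `[0,s]` is `q₀ ξ''(q₀) + ξ'(s) - ξ'(q₀) = ξ'(s) + c` by the choice of `c`;
at `q = 1` the same identity gives `L - ∫₀¹ α = f(1) > 0`.
-/

open Set Filter MeasureTheory

theorem hasDerivAt_tsum_mul_pow_sub {a : ℕ → ℝ} {ρ x : ℝ} (k : ℕ) (hρ : 1 ≤ ρ) (hx : |x| < ρ)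
    (ha : Summable fun p : ℕ => |a p| * p * ρ ^ p) :
    HasDerivAt (fun z => ∑' p, a p * z ^ (p - k))
      (∑' p, a p * (p - k : ℕ) * x ^ (p - (k + 1))) x := by
  have hderiv (p : ℕ) (y : ℝ) : HasDerivAt (fun z => a p * z ^ (p - k))
      (a p * (p - k : ℕ) * y ^ (p - (k + 1))) y := by
    simpa [mul_assoc, Nat.sub_sub] using (hasDerivAt_pow (p - k) y).const_mul (a p)
  have hbound (p : ℕ) (y : ℝ) (hy : y ∈ Ioo (-ρ) ρ) :
      ‖a p * ((p - k : ℕ) : ℝ) * y ^ (p - (k + 1))‖ ≤ |a p| * p * ρ ^ p := by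
    have hy : |y| ≤ ρ := abs_le.2 ⟨hy.1.le, hy.2.le⟩
    calc ‖a p * ((p - k : ℕ) : ℝ) * y ^ (p - (k + 1))‖
        = |a p| * ((p - k : ℕ) : ℝ) * |y| ^ (p - (k + 1)) := by simp
      _ ≤ |a p| * p * ρ ^ (p - (k + 1)) := by gcongr; exact_mod_cast Nat.sub_le p k
      _ ≤ |a p| * p * ρ ^ p := by gcongr; exact Nat.sub_le _ _
  have hsummable_zero : Summable fun p => a p * (0 : ℝ) ^ (p - k) :=
    summable_of_ne_finset_zero (s := Finset.range (k + 1)) fun p hp => by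
      rw [Finset.mem_range, not_lt] at hp
      simp [zero_pow (by omega : p - k ≠ 0)]
  exact hasDerivAt_tsum_of_isPreconnected ha isOpen_Ioo (convex_Ioo (-ρ) ρ).isPreconnected
    (fun p y _ => hderiv p y) hbound ⟨by linarith, by linarith⟩ hsummable_zero (abs_lt.1 hx)

theorem natCast_mul_sub_one_nonneg (p : ℕ) : 0 ≤ (p : ℝ) * (p - 1) := by
  rcases p with _ | n
  · simp
  · push_cast; rw [add_sub_cancel_right]; positivity

theorem natCast_mul_sub_one_le_sq (p : ℕ) : (p : ℝ) * (p - 1) ≤ p ^ 2 := by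
  nlinarith [(Nat.cast_nonneg p : (0 : ℝ) ≤ p)]

theorem HasDerivAt.inv_sqrt {g : ℝ → ℝ} {g' x : ℝ} (hg : HasDerivAt g g' x) (hx : 0 < g x) :
    HasDerivAt (fun y => (√(g y))⁻¹) (-(g' / (2 * g x ^ ((3 : ℝ) / 2)))) x := by
  refine ((hg.sqrt hx.ne').inv (Real.sqrt_pos.2 hx).ne').congr_deriv ?_
  rw [Real.sq_sqrt hx.le, show (3 : ℝ) / 2 = 1 + 1 / 2 by norm_num, Real.rpow_add hx,
    Real.rpow_one, ← Real.sqrt_eq_rpow]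
  field_simp

theorem MonotoneOn.ite_lt_zero {β : ℝ → ℝ} {b c : ℝ} (hβ : MonotoneOn β (Icc b c))
    (hβ₀ : ∀ x ∈ Icc b c, 0 ≤ β x) :
    MonotoneOn (fun x => if x < b then 0 else β x) (Iic c) := by
  intro x hx y hy hxy
  dsimp only
  split_ifs with hxb hyb hyb
  · exact le_rfl
  · exact hβ₀ y ⟨not_lt.1 hyb, hy⟩
  · exact absurd (hxy.trans_lt hyb) hxb
  · exact hβ ⟨not_lt.1 hxb, hx⟩ ⟨not_lt.1 hyb, hy⟩ hxy

namespace intervalIntegral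

theorem integral_ite_lt_zero (β : ℝ → ℝ) {a b c : ℝ} (hab : a ≤ b) (hac : a ≤ c) :
    ∫ x in a..c, (if x < b then 0 else β x) = ∫ x in b..max c b, β x := by
  have hae : ∀ᵐ x, x ∈ uIoc a c → (if x < b then 0 else β x) = (Ioi b).indicator β x := by
    filter_upwards [Measure.ae_ne volume b] with x hxb _
    by_cases hx : x < b
    · simp [hx, hx.not_gt]
    · simp [hx, lt_of_le_of_ne (not_lt.1 hx) hxb.symm]
  rw [integral_congr_ae hae, integral_of_le hac, setIntegral_indicator measurableSet_Ioi,
    Ioc_inter_Ioi, sup_of_le_right hab]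
  rcases le_total b c with hbc | hcb
  · rw [max_eq_left hbc, integral_of_le hbc]
  · rw [max_eq_right hcb, Ioc_eq_empty_of_le hcb, integral_same, Measure.restrict_empty,
      integral_zero_measure]

theorem integral_comp_max {g : ℝ → ℝ} {a b c : ℝ} (hab : a ≤ b) (hbc : b ≤ c)
    (hg : ContinuousOn g (Icc b c)) :
    ∫ x in a..c, g (max x b) = (b - a) * g b + ∫ x in b..c, g x := by
  have hcont : ContinuousOn (fun x => g (max x b)) (Icc a c) :=
    hg.comp (continuous_id.max continuous_const).continuousOn
      fun x hx => ⟨le_max_right x b, max_le hx.2 hbc⟩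
  rw [← integral_add_adjacent_intervals
    ((hcont.mono (Icc_subset_Icc_right hbc)).intervalIntegrable_of_Icc hab)
    ((hcont.mono (Icc_subset_Icc_left hab)).intervalIntegrable_of_Icc hbc)]
  congr 1
  · rw [integral_congr (g := fun _ => g b) fun x hx => ?_, integral_const, smul_eq_mul]
    rw [uIcc_of_le hab] at hx
    simp [max_eq_right hx.2]
  · refine integral_congr fun x hx => ?_
    rw [uIcc_of_le hbc] at hx
    simp [max_eq_left hx.1]

end intervalIntegral

namespace MixtureFunction

variable (ξ : MixtureFunction)

theorem exists_summable_cube_mul_coeff_mul_pow :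
    ∃ ρ > 1, Summable fun p : ℕ => (p : ℝ) ^ 3 * ξ.coeff p * ρ ^ p := by
  obtain ⟨C, r, hC, hr0, hr1, hb⟩ := ξ.coeff_decay
  refine ⟨(1 + r⁻¹) / 2, by linarith [one_lt_inv₀ hr0 |>.2 hr1], ?_⟩
  have hrρ : r * ((1 + r⁻¹) / 2) < 1 := by
    rw [mul_div_assoc', mul_add, mul_inv_cancel₀ hr0.ne']; linarith
  have hgeom := (summable_pow_mul_geometric_of_norm_lt_one 3
    (by rwa [Real.norm_of_nonneg (by positivity)] : ‖r * ((1 + r⁻¹) / 2)‖ < 1)).mul_left C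
  refine hgeom.of_nonneg_of_le (fun p => by have := ξ.coeff_nonneg p; positivity) fun p => ?_
  calc (p : ℝ) ^ 3 * ξ.coeff p * ((1 + r⁻¹) / 2) ^ p
      ≤ (p : ℝ) ^ 3 * (C * r ^ p) * ((1 + r⁻¹) / 2) ^ p := by gcongr; exact hb p
    _ = C * ((p : ℝ) ^ 3 * (r * ((1 + r⁻¹) / 2)) ^ p) := by rw [mul_pow]; ring

theorem hasDerivAt_tsum_of_abs_le_sq_mul_coeff {a : ℕ → ℝ} (k : ℕ)
    (ha : ∀ p, |a p| ≤ (p : ℝ) ^ 2 * ξ.coeff p) {x : ℝ} (hx : |x| ≤ 1) :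
    HasDerivAt (fun z => ∑' p, a p * z ^ (p - k))
      (∑' p, a p * (p - k : ℕ) * x ^ (p - (k + 1))) x := by
  obtain ⟨ρ, hρ, hsum⟩ := ξ.exists_summable_cube_mul_coeff_mul_pow
  refine hasDerivAt_tsum_mul_pow_sub k hρ.le (by linarith) <|
    hsum.of_nonneg_of_le (fun p => by positivity) fun p => ?_
  calc |a p| * p * ρ ^ p ≤ (p : ℝ) ^ 2 * ξ.coeff p * p * ρ ^ p := by gcongr; exact ha p
    _ = (p : ℝ) ^ 3 * ξ.coeff p * ρ ^ p := by ring

theorem hasDerivAt_xi1_s10 {x : ℝ} (hx : |x| ≤ 1) : HasDerivAt ξ.xi1 (ξ.xi2 x) x := by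
  have ha (p : ℕ) : |p * ξ.coeff p| ≤ (p : ℝ) ^ 2 * ξ.coeff p := by
    rw [abs_of_nonneg (by have := ξ.coeff_nonneg p; positivity)]
    gcongr
    · exact ξ.coeff_nonneg p
    · exact_mod_cast Nat.le_self_pow two_ne_zero p
  refine (ξ.hasDerivAt_tsum_of_abs_le_sq_mul_coeff 1 ha hx).congr_deriv <| tsum_congr fun p => ?_
  rcases p with _ | n
  · simp
  · push_cast [Nat.add_sub_cancel]; ring

theorem hasDerivAt_xi2 {x : ℝ} (hx : |x| ≤ 1) : HasDerivAt ξ.xi2 (ξ.xi3 x) x := by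
  have ha (p : ℕ) : |p * (p - 1) * ξ.coeff p| ≤ (p : ℝ) ^ 2 * ξ.coeff p := by
    have := ξ.coeff_nonneg p
    rw [abs_of_nonneg (by have := natCast_mul_sub_one_nonneg p; positivity)]
    gcongr
    exact natCast_mul_sub_one_le_sq p
  refine (ξ.hasDerivAt_tsum_of_abs_le_sq_mul_coeff 2 ha hx).congr_deriv <| tsum_congr fun p => ?_
  rcases p with _ | _ | n
  · simp
  · simp
  · push_cast [Nat.add_sub_cancel]; ring

theorem xi2_pos {x : ℝ} (hx : x ∈ Ioc 0 1) : 0 < ξ.xi2 x := by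
  obtain ⟨ρ, hρ, hsum⟩ := ξ.exists_summable_cube_mul_coeff_mul_pow
  have hterm (p : ℕ) : 0 ≤ (p : ℝ) * (p - 1) * ξ.coeff p * x ^ (p - 2) := by
    have := ξ.coeff_nonneg p; have := natCast_mul_sub_one_nonneg p; have := hx.1; positivity
  have hsummable : Summable fun p : ℕ => (p : ℝ) * (p - 1) * ξ.coeff p * x ^ (p - 2) := by
    refine hsum.of_nonneg_of_le hterm fun p => ?_
    have hp : (p : ℝ) ^ 2 ≤ p ^ 3 := by
      rcases p with _ | n
      · simp
      · push_cast; nlinarith [(Nat.cast_nonneg n : (0 : ℝ) ≤ n)]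
    have hx1 : x ^ (p - 2) ≤ ρ ^ p := (pow_le_one₀ hx.1.le hx.2).trans (one_le_pow₀ hρ.le)
    have := ξ.coeff_nonneg p
    exact mul_le_mul (mul_le_mul_of_nonneg_right ((natCast_mul_sub_one_le_sq p).trans hp) this)
      hx1 (pow_nonneg hx.1.le _) (by positivity)
  obtain ⟨p, hp⟩ := ξ.nontrivial
  obtain ⟨n, rfl⟩ : ∃ n, p = n + 2 := by
    rcases p with _ | _ | n
    · exact absurd ξ.coeff_zero hp
    · exact absurd ξ.coeff_one hp
    · exact ⟨n, rfl⟩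
  calc 0 < ((n + 2 : ℕ) : ℝ) * ((n + 2 : ℕ) - 1) * ξ.coeff (n + 2) * x ^ (n + 2 - 2) := by
        have := (ξ.coeff_nonneg _).lt_of_ne' hp; have := hx.1; norm_num [add_sub_assoc]; positivity
    _ ≤ ξ.xi2 x := hsummable.le_tsum _ fun q _ => hterm q

theorem xi3_nonneg {x : ℝ} (hx : 0 ≤ x) : 0 ≤ ξ.xi3 x := by
  refine tsum_nonneg fun p => ?_
  have := ξ.coeff_nonneg p
  rcases p with _ | _ | n
  · simp
  · simp
  · norm_num [add_sub_assoc]; positivity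

theorem hasDerivAt_inv_sqrt_xi2 {x : ℝ} (hx : x ∈ Ioc 0 1) :
    HasDerivAt (fun s => (√(ξ.xi2 s))⁻¹) (-(ξ.xi3 x / (2 * ξ.xi2 x ^ ((3 : ℝ) / 2)))) x :=
  (ξ.hasDerivAt_xi2 (abs_le.2 ⟨by linarith [hx.1], hx.2⟩)).inv_sqrt (ξ.xi2_pos hx)

theorem xi3_div_rpow_nonneg {x : ℝ} (hx : x ∈ Ioc 0 1) :
    0 ≤ ξ.xi3 x / (2 * ξ.xi2 x ^ ((3 : ℝ) / 2)) := by
  have := ξ.xi3_nonneg hx.1.le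
  have := ξ.xi2_pos hx
  positivity

theorem integral_xi3_div_rpow {b s : ℝ} (hb : 0 < b) (hbs : b ≤ s) (hs : s ≤ 1) :
    ∫ x in b..s, ξ.xi3 x / (2 * ξ.xi2 x ^ ((3 : ℝ) / 2)) =
      (√(ξ.xi2 b))⁻¹ - (√(ξ.xi2 s))⁻¹ := by
  have hmem : ∀ x ∈ uIcc b s, x ∈ Ioc 0 1 := fun x hx => by
    rw [uIcc_of_le hbs] at hx
    exact ⟨hb.trans_le hx.1, hx.2.trans hs⟩
  have hderiv : ∀ x ∈ uIcc b s, HasDerivAt (fun y => -(√(ξ.xi2 y))⁻¹)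
      (ξ.xi3 x / (2 * ξ.xi2 x ^ ((3 : ℝ) / 2))) x := fun x hx => by
    simpa using (ξ.hasDerivAt_inv_sqrt_xi2 (hmem x hx)).fun_neg
  have hint := intervalIntegral.intervalIntegrable_deriv_of_nonneg
    (fun x hx => (hderiv x hx).continuousAt.continuousWithinAt)
    (fun x hx => hderiv x (Ioo_subset_Icc_self hx))
    (fun x hx => ξ.xi3_div_rpow_nonneg (hmem x (Ioo_subset_Icc_self hx)))
  rw [intervalIntegral.integral_eq_sub_of_hasDerivAt hderiv hint]
  ring

theorem monotoneOn_xi3_div_rpow {b : ℝ} (hb : 0 < b)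
    (hconc : ConcaveOn ℝ (Icc b 1) (fun s => (√(ξ.xi2 s))⁻¹)) :
    MonotoneOn (fun x => ξ.xi3 x / (2 * ξ.xi2 x ^ ((3 : ℝ) / 2))) (Icc b 1) := by
  have hderiv : ∀ x ∈ Icc b 1, HasDerivAt (fun s => (√(ξ.xi2 s))⁻¹)
      (-(ξ.xi3 x / (2 * ξ.xi2 x ^ ((3 : ℝ) / 2)))) x :=
    fun x hx => ξ.hasDerivAt_inv_sqrt_xi2 ⟨hb.trans_le hx.1, hx.2⟩
  intro x hx y hy hxy
  have := hconc.antitoneOn_deriv (fun z hz => (hderiv z hz).differentiableAt) hx hy hxy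
  rw [(hderiv x hx).deriv, (hderiv y hy).deriv] at this
  exact neg_le_neg_iff.1 this

theorem integral_xi2_comp_max {b s : ℝ} (hb : 0 ≤ b) (hbs : b ≤ s) (hs : s ≤ 1) :
    ∫ q in (0 : ℝ)..s, ξ.xi2 (max q b) = b * ξ.xi2 b + ξ.xi1 s - ξ.xi1 b := by
  have hderiv : ∀ x ∈ Icc b s, HasDerivAt ξ.xi1 (ξ.xi2 x) x ∧ HasDerivAt ξ.xi2 (ξ.xi3 x) x :=
    fun x hx =>
      have hx1 : |x| ≤ 1 := abs_le.2 ⟨by linarith [hx.1], hx.2.trans hs⟩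
      ⟨ξ.hasDerivAt_xi1_s10 hx1, ξ.hasDerivAt_xi2 hx1⟩
  have hcont : ContinuousOn ξ.xi2 (Icc b s) :=
    fun x hx => (hderiv x hx).2.continuousAt.continuousWithinAt
  rw [intervalIntegral.integral_comp_max hb hbs hcont,
    intervalIntegral.integral_eq_sub_of_hasDerivAt
      (fun x hx => (hderiv x (uIcc_of_le hbs ▸ hx)).1)
      ((uIcc_of_le hbs ▸ hcont).intervalIntegrable)]
  ring

end MixtureFunction

theorem concavity_gives_stationary_order_parameter_general (ξ : MixtureFunction)
    (q₀ : ℝ) (hq₀ : q₀ ∈ Ioo (0 : ℝ) 1)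
    (c : ℝ) (hfix : c + ξ.xi1 q₀ = q₀ * ξ.xi2 q₀)
    (hconc : ConcaveOn ℝ (Icc q₀ 1) (fun s => (Real.sqrt (ξ.xi2 s))⁻¹)) :
    let L : ℝ := (Real.sqrt (ξ.xi2 q₀))⁻¹
    let α : ℝ → ℝ := fun s => if s < q₀ then 0 else ξ.xi3 s / (2 * ξ.xi2 s ^ ((3 : ℝ) / 2))
    let a : ℝ → ℝ := fun q => ∫ r in (0 : ℝ)..q, α r
    (∀ s ∈ Icc (0 : ℝ) 1, 0 ≤ α s) ∧
      MonotoneOn α (Icc 0 1) ∧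
      (∀ s ∈ Icc q₀ 1, L - (∫ r in q₀..s, α r) = (Real.sqrt (ξ.xi2 s))⁻¹) ∧
      (∫ r in (0 : ℝ)..1, α r) < L ∧
      (∀ s ∈ Icc q₀ 1, ξ.xi1 s + c = ∫ q in (0 : ℝ)..s, ((L - a q)⁻¹) ^ 2) := by
  intro L α a
  obtain ⟨hq0, hq1⟩ := hq₀
  have hα_mono : MonotoneOn α (Iic 1) :=
    (ξ.monotoneOn_xi3_div_rpow hq0 hconc).ite_lt_zero
      fun x hx => ξ.xi3_div_rpow_nonneg ⟨hq0.trans_le hx.1, hx.2⟩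
  have hα_integral {b s : ℝ} (hb : b ≤ q₀) (hs : s ∈ Icc b 1) :
      L - ∫ r in b..s, α r = (√(ξ.xi2 (max s q₀)))⁻¹ := by
    rw [intervalIntegral.integral_ite_lt_zero _ hb hs.1,
      ξ.integral_xi3_div_rpow hq0 (le_max_right s q₀) (max_le hs.2 hq1.le)]
    ring
  refine ⟨fun s hs => ?_, hα_mono.mono Icc_subset_Iic_self, fun s hs => ?_, ?_, fun s hs => ?_⟩
  · have h := hα_mono (mem_Iic.2 zero_le_one) hs.2 hs.1
    rwa [show α 0 = 0 from if_pos hq0] at h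
  · rw [hα_integral le_rfl hs, max_eq_left hs.1]
  · have := hα_integral hq0.le ⟨zero_le_one, le_rfl⟩
    rw [max_eq_left hq1.le] at this
    have := Real.sqrt_pos.2 (ξ.xi2_pos ⟨zero_lt_one, le_rfl⟩)
    linarith [inv_pos.2 this]
  · rw [intervalIntegral.integral_congr fun q hq => ?_, ξ.integral_xi2_comp_max hq0.le hs.1 hs.2]
    · linarith
    · rw [uIcc_of_le (hq0.le.trans hs.1)] at hq
      rw [hα_integral hq0.le ⟨hq.1, hq.2.trans hs.2⟩, inv_inv,
        Real.sq_sqrt (ξ.xi2_pos ⟨hq0.trans_le (le_max_right _ _), max_le (hq.2.trans hs.2) hq1.le⟩).le]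

/-- Concavity of `ξ''^{-1/2}` yields the explicit no-overlap-gap order parameter: with
`L = ξ''(q₀)^{-1/2}`, `α = 0` on `[0,q₀)` and `α(s) = ξ'''(s)/(2 ξ''(s)^{3/2})` on `[q₀,1]`,
`α` is nonnegative and nondecreasing, `L - ∫_{q₀}^s α = ξ''(s)^{-1/2}` on `[q₀,1]`,
`L > ∫₀¹ α`, and the zero-temperature stationarity condition
`ξ'(s) + c = ∫₀^s (L - a(q))⁻² dq` holds on `[q₀,1]`. -/
theorem concavity_gives_stationary_order_parameter (ξ : MixtureFunction)
    (q₀ : ℝ) (hq₀ : q₀ ∈ Ioo (0 : ℝ) 1)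
    (c : ℝ) (hc : 0 ≤ c) (hfix : c + ξ.xi1 q₀ = q₀ * ξ.xi2 q₀)
    (hconc : ConcaveOn ℝ (Icc q₀ 1) (fun s => (Real.sqrt (ξ.xi2 s))⁻¹)) :
    let L : ℝ := (Real.sqrt (ξ.xi2 q₀))⁻¹
    let α : ℝ → ℝ := fun s => if s < q₀ then 0 else ξ.xi3 s / (2 * ξ.xi2 s ^ ((3 : ℝ) / 2))
    let a : ℝ → ℝ := fun q => ∫ r in (0 : ℝ)..q, α r
    (∀ s ∈ Icc (0 : ℝ) 1, 0 ≤ α s) ∧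
      MonotoneOn α (Icc 0 1) ∧
      (∀ s ∈ Icc q₀ 1, L - (∫ r in q₀..s, α r) = (Real.sqrt (ξ.xi2 s))⁻¹) ∧
      (∫ r in (0 : ℝ)..1, α r) < L ∧
      (∀ s ∈ Icc q₀ 1, ξ.xi1 s + c = ∫ q in (0 : ℝ)..s, ((L - a q)⁻¹) ^ 2) :=
  concavity_gives_stationary_order_parameter_general ξ q₀ hq₀ c hfix hconc
end
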